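/- arXiv:1810.04352 — 4 statements merged into one kernel-verified Lean document; each statement's English description precedes it below -/
import Mathlib

section
/- Fix real numbers μ > 0, d̲ < d̄, and X̲, X̄ with d̲ ≤ X̲ ≤ (d̲ + d̄)/2 ≤ X̄ ≤ d̄. Define the nonconvex set ψ = {(X, V) ∈ ℝ² : X̲ ≤ X ≤ X̄, 0 ≤ V, V ≤ μ(X − d̲)², V ≤ μ(X − d̄)²} and the polyhedral set Ψ = {(X, V) ∈ ℝ² : X̲ ≤ X ≤ X̄, 0 ≤ V, V ≤ μ(a X + b), V ≤ μ(a′ X + b′)}, where a = X̄ − (3/2)d̄ + (1/2)d̲, b = d̄² − ((d̄ + d̲)/2) X̄, a′ = X̲ − (3/2)d̲ + (1/2)d̄, and b′ = d̲² − ((d̄ + d̲)/2) X̲. Then the convex hull of ψ (in ℝ²) equals Ψ. [The paper's Theorem 3.] -/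
lemma psi_convex (μ a b a' b' Xl Xu : ℝ) :
    Convex ℝ {p : ℝ × ℝ | Xl ≤ p.1 ∧ p.1 ≤ Xu ∧ 0 ≤ p.2 ∧
      p.2 ≤ μ * (a * p.1 + b) ∧ p.2 ≤ μ * (a' * p.1 + b')} := by
  rintro ⟨p1, p2⟩ hp ⟨q1, q2⟩ hq α β hα hβ hαβ
  have hβ' : β = 1 - α := by linarith
  subst hβ'
  simp only [Set.mem_setOf_eq] at hp hq
  obtain ⟨hp1, hp2, hp3, hp4, hp5⟩ := hp
  obtain ⟨hq1, hq2, hq3, hq4, hq5⟩ := hq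
  simp only [Set.mem_setOf_eq, Prod.smul_mk, Prod.mk_add_mk, smul_eq_mul]
  refine ⟨?_, ?_, ?_, ?_, ?_⟩
  · linarith [mul_le_mul_of_nonneg_left hp1 hα, mul_le_mul_of_nonneg_left hq1 hβ]
  · linarith [mul_le_mul_of_nonneg_left hp2 hα, mul_le_mul_of_nonneg_left hq2 hβ]
  · linarith [mul_le_mul_of_nonneg_left hp3 hα, mul_le_mul_of_nonneg_left hq3 hβ]
  · nlinarith [mul_le_mul_of_nonneg_left hp4 hα, mul_le_mul_of_nonneg_left hq4 hβ]
  · nlinarith [mul_le_mul_of_nonneg_left hp5 hα, mul_le_mul_of_nonneg_left hq5 hβ]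


lemma seg_mem {S : Set (ℝ × ℝ)} {x1 y1 x2 y2 X V t : ℝ}
    (h1 : (x1, y1) ∈ convexHull ℝ S) (h2 : (x2, y2) ∈ convexHull ℝ S)
    (ht0 : 0 ≤ t) (ht1 : t ≤ 1)
    (hX : X = (1 - t) * x1 + t * x2) (hV : V = (1 - t) * y1 + t * y2) :
    (X, V) ∈ convexHull ℝ S := by
  have h := (convex_convexHull ℝ S) h1 h2 (by linarith : (0:ℝ) ≤ 1 - t) ht0 (by ring)
  have he : ((1 - t) • ((x1, y1) : ℝ × ℝ) + t • ((x2, y2) : ℝ × ℝ)) = (X, V) := by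
    simp only [Prod.smul_mk, Prod.mk_add_mk, smul_eq_mul, Prod.mk.injEq]
    constructor <;> linarith
  rwa [he] at h

lemma seg_mem_div {S : Set (ℝ × ℝ)} {x1 y1 x2 y2 X V num den : ℝ}
    (h1 : (x1, y1) ∈ convexHull ℝ S) (h2 : (x2, y2) ∈ convexHull ℝ S)
    (hden : 0 < den) (hnum0 : 0 ≤ num) (hnum1 : num ≤ den)
    (hX : den * X = (den - num) * x1 + num * x2)
    (hV : den * V = (den - num) * y1 + num * y2) :
    (X, V) ∈ convexHull ℝ S := by
  apply seg_mem h1 h2 (t := num / den)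
  · exact div_nonneg hnum0 hden.le
  · rw [div_le_one hden]; exact hnum1
  · field_simp
    linear_combination hX
  · field_simp
    linear_combination hV

set_option maxHeartbeats 2000000 in
/-- Theorem 3: the convex hull of the nonconvex set `ψ` (feasible region of the concave
constraints from the parallel facets) equals the polyhedral set `Ψ` defined by the
secant-line relaxations. -/
theorem stmt_3 (μ dl du Xl Xu : ℝ)
    (hμ : 0 < μ) (hd : dl < du)
    (h1 : dl ≤ Xl) (h2 : Xl ≤ (dl + du) / 2) (h3 : (dl + du) / 2 ≤ Xu) (h4 : Xu ≤ du)
    (a b a' b' : ℝ)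
    (ha : a = Xu - (3 / 2) * du + (1 / 2) * dl)
    (hb : b = du ^ 2 - ((du + dl) / 2) * Xu)
    (ha' : a' = Xl - (3 / 2) * dl + (1 / 2) * du)
    (hb' : b' = dl ^ 2 - ((du + dl) / 2) * Xl)
    (ψ Ψ : Set (ℝ × ℝ))
    (hψ : ψ = {p : ℝ × ℝ | Xl ≤ p.1 ∧ p.1 ≤ Xu ∧ 0 ≤ p.2 ∧
      p.2 ≤ μ * (p.1 - dl) ^ 2 ∧ p.2 ≤ μ * (p.1 - du) ^ 2})
    (hΨ : Ψ = {p : ℝ × ℝ | Xl ≤ p.1 ∧ p.1 ≤ Xu ∧ 0 ≤ p.2 ∧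
      p.2 ≤ μ * (a * p.1 + b) ∧ p.2 ≤ μ * (a' * p.1 + b')}) :
    convexHull ℝ ψ = Ψ := by
  subst ha hb ha' hb'
  apply Set.Subset.antisymm
  · apply convexHull_min
    · -- ψ ⊆ Ψ
      rintro ⟨X, V⟩ hp
      rw [hψ] at hp
      rw [hΨ]
      simp only [Set.mem_setOf_eq] at hp ⊢
      obtain ⟨hX1, hX2, hV0, hVl, hVu⟩ := hp
      refine ⟨hX1, hX2, hV0, ?_, ?_⟩
      · rcases le_total X ((dl + du) / 2) with hc | hc
        · have key : (X - dl) ^ 2 ≤ (Xu - (3 / 2) * du + (1 / 2) * dl) * X +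
              (du ^ 2 - ((du + dl) / 2) * Xu) := by
            nlinarith [mul_nonneg (show (0:ℝ) ≤ (dl + du) / 2 - X by linarith)
              (show (0:ℝ) ≤ X - (Xu - 2 * du + 2 * dl) by linarith)]
          calc V ≤ μ * (X - dl) ^ 2 := hVl
            _ ≤ _ := by nlinarith
        · have key : (X - du) ^ 2 ≤ (Xu - (3 / 2) * du + (1 / 2) * dl) * X +
              (du ^ 2 - ((du + dl) / 2) * Xu) := by
            nlinarith [mul_nonneg (show (0:ℝ) ≤ X - (dl + du) / 2 by linarith)
              (show (0:ℝ) ≤ Xu - X by linarith)]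
          calc V ≤ μ * (X - du) ^ 2 := hVu
            _ ≤ _ := by nlinarith
      · rcases le_total X ((dl + du) / 2) with hc | hc
        · have key : (X - dl) ^ 2 ≤ (Xl - (3 / 2) * dl + (1 / 2) * du) * X +
              (dl ^ 2 - ((du + dl) / 2) * Xl) := by
            nlinarith [mul_nonneg (show (0:ℝ) ≤ X - Xl by linarith)
              (show (0:ℝ) ≤ (dl + du) / 2 - X by linarith)]
          calc V ≤ μ * (X - dl) ^ 2 := hVl
            _ ≤ _ := by nlinarith
        · have key : (X - du) ^ 2 ≤ (Xl - (3 / 2) * dl + (1 / 2) * du) * X +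
              (dl ^ 2 - ((du + dl) / 2) * Xl) := by
            nlinarith [mul_nonneg (show (0:ℝ) ≤ X - (dl + du) / 2 by linarith)
              (show (0:ℝ) ≤ (Xl + 2 * du - 2 * dl) - X by linarith)]
          calc V ≤ μ * (X - du) ^ 2 := hVu
            _ ≤ _ := by nlinarith
    · -- Ψ convex
      rw [hΨ]
      exact psi_convex μ _ _ _ _ Xl Xu
  · -- Ψ ⊆ convexHull ψ
    rintro ⟨X, V⟩ hp
    rw [hΨ] at hp
    simp only [Set.mem_setOf_eq] at hp
    obtain ⟨hX1, hX2, hV0, hVa, hVa'⟩ := hp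
    have hB : ((X, (0 : ℝ)) : ℝ × ℝ) ∈ ψ := by
      rw [hψ]; simp only [Set.mem_setOf_eq]
      exact ⟨hX1, hX2, le_refl _, by positivity, by positivity⟩
    rcases le_total X ((dl + du) / 2) with hc | hc
    · -- left piece: line a'
      have hA : ((Xl, μ * (Xl - dl) ^ 2) : ℝ × ℝ) ∈ ψ := by
        rw [hψ]; simp only [Set.mem_setOf_eq]
        refine ⟨le_refl _, by linarith, by positivity, le_refl _, ?_⟩
        have h := mul_nonneg (mul_nonneg (show (0:ℝ) ≤ du - dl by linarith)
          (show (0:ℝ) ≤ dl + du - 2 * Xl by linarith)) hμ.le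
        nlinarith [h]
      have hM : (((dl + du) / 2, μ * ((du - dl) / 2) ^ 2) : ℝ × ℝ) ∈ ψ := by
        rw [hψ]; simp only [Set.mem_setOf_eq]
        exact ⟨h2, h3, by positivity, le_of_eq (by ring), le_of_eq (by ring)⟩
      have hQ : ((X, μ * ((Xl - (3 / 2) * dl + (1 / 2) * du) * X +
          (dl ^ 2 - ((du + dl) / 2) * Xl))) : ℝ × ℝ) ∈ convexHull ℝ ψ := by
        rcases eq_or_lt_of_le h2 with heq | hlt
        · have hXe : X = Xl := le_antisymm (by linarith) hX1
          have hval : μ * ((Xl - (3 / 2) * dl + (1 / 2) * du) * X +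
              (dl ^ 2 - ((du + dl) / 2) * Xl)) = μ * (Xl - dl) ^ 2 := by
            rw [hXe]
            have : Xl = (dl + du) / 2 := heq
            rw [this]; ring
          rw [hval, hXe]
          exact subset_convexHull ℝ ψ hA
        · apply seg_mem_div (subset_convexHull ℝ ψ hA) (subset_convexHull ℝ ψ hM)
            (num := X - Xl) (den := (dl + du) / 2 - Xl)
          · linarith
          · linarith
          · linarith
          · ring
          · ring
      have htop : 0 ≤ μ * ((Xl - (3 / 2) * dl + (1 / 2) * du) * X +
          (dl ^ 2 - ((du + dl) / 2) * Xl)) := le_trans hV0 hVa'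
      rcases eq_or_lt_of_le htop with h0 | h0
      · have hVe : V = 0 := le_antisymm (by linarith [hVa']) hV0
        rw [hVe]
        exact subset_convexHull ℝ ψ hB
      · apply seg_mem_div (subset_convexHull ℝ ψ hB) hQ
          (num := V) (den := μ * ((Xl - (3 / 2) * dl + (1 / 2) * du) * X +
            (dl ^ 2 - ((du + dl) / 2) * Xl)))
        · exact h0
        · exact hV0
        · exact hVa'
        · ring
        · ring
    · -- right piece: line a
      have hA : ((Xu, μ * (Xu - du) ^ 2) : ℝ × ℝ) ∈ ψ := by
        rw [hψ]; simp only [Set.mem_setOf_eq]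
        refine ⟨by linarith, le_refl _, by positivity, ?_, le_refl _⟩
        have h := mul_nonneg (mul_nonneg (show (0:ℝ) ≤ du - dl by linarith)
          (show (0:ℝ) ≤ 2 * Xu - dl - du by linarith)) hμ.le
        nlinarith [h]
      have hM : (((dl + du) / 2, μ * ((du - dl) / 2) ^ 2) : ℝ × ℝ) ∈ ψ := by
        rw [hψ]; simp only [Set.mem_setOf_eq]
        exact ⟨h2, h3, by positivity, le_of_eq (by ring), le_of_eq (by ring)⟩
      have hQ : ((X, μ * ((Xu - (3 / 2) * du + (1 / 2) * dl) * X +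
          (du ^ 2 - ((du + dl) / 2) * Xu))) : ℝ × ℝ) ∈ convexHull ℝ ψ := by
        rcases eq_or_lt_of_le h3 with heq | hlt
        · have hXe : X = Xu := le_antisymm hX2 (by linarith)
          have hval : μ * ((Xu - (3 / 2) * du + (1 / 2) * dl) * X +
              (du ^ 2 - ((du + dl) / 2) * Xu)) = μ * (Xu - du) ^ 2 := by
            rw [hXe]
            have : Xu = (dl + du) / 2 := heq.symm
            rw [this]; ring
          rw [hval, hXe]
          exact subset_convexHull ℝ ψ hA
        · apply seg_mem_div (subset_convexHull ℝ ψ hM) (subset_convexHull ℝ ψ hA)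
            (num := X - (dl + du) / 2) (den := Xu - (dl + du) / 2)
          · linarith
          · linarith
          · linarith
          · ring
          · ring
      have htop : 0 ≤ μ * ((Xu - (3 / 2) * du + (1 / 2) * dl) * X +
          (du ^ 2 - ((du + dl) / 2) * Xu)) := le_trans hV0 hVa
      rcases eq_or_lt_of_le htop with h0 | h0
      · have hVe : V = 0 := le_antisymm (by linarith [hVa]) hV0
        rw [hVe]
        exact subset_convexHull ℝ ψ hB
      · apply seg_mem_div (subset_convexHull ℝ ψ hB) hQ
          (num := V) (den := μ * ((Xu - (3 / 2) * du + (1 / 2) * dl) * X +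
            (du ^ 2 - ((du + dl) / 2) * Xu)))
        · exact h0
        · exact hV0
        · exact hVa
        · ring
        · ring
end

section
/- Fix real numbers μ > 0, d̲ < d̄, and X̲, X̄ with d̲ ≤ X̲ ≤ (d̲ + d̄)/2 ≤ X̄ ≤ d̄, and define ψ and Ψ as follows: ψ = {(X, V) ∈ ℝ² : X̲ ≤ X ≤ X̄, 0 ≤ V, V ≤ μ(X − d̲)², V ≤ μ(X − d̄)²}; Ψ = {(X, V) ∈ ℝ² : X̲ ≤ X ≤ X̄, 0 ≤ V, V ≤ μ(a X + b), V ≤ μ(a′ X + b′)} with a = X̄ − (3/2)d̄ + (1/2)d̲, b = d̄² − ((d̄ + d̲)/2) X̄, a′ = X̲ − (3/2)d̲ + (1/2)d̄, b′ = d̲² − ((d̄ + d̲)/2) X̲. Then Ψ is a convex set and ψ ⊆ Ψ; hence Ψ is a convex relaxation of ψ and the convex hull of ψ is contained in Ψ. [Part (i) of the proof of the paper's Theorem 3.] -/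
/-- Part (i) of the proof of Theorem 3: `Ψ` is convex and contains `ψ`, hence it is a
convex relaxation of `ψ` and contains its convex hull.
 -/
theorem stmt_4 (μ dl du Xl Xu : ℝ)
    (hμ : 0 < μ) (hd : dl < du)
    (h1 : dl ≤ Xl) (h2 : Xl ≤ (dl + du) / 2) (h3 : (dl + du) / 2 ≤ Xu) (h4 : Xu ≤ du)
    (a b a' b' : ℝ)
    (ha : a = Xu - (3 / 2) * du + (1 / 2) * dl)
    (hb : b = du ^ 2 - ((du + dl) / 2) * Xu)
    (ha' : a' = Xl - (3 / 2) * dl + (1 / 2) * du)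
    (hb' : b' = dl ^ 2 - ((du + dl) / 2) * Xl)
    (ψ Ψ : Set (ℝ × ℝ))
    (hψ : ψ = {p : ℝ × ℝ | Xl ≤ p.1 ∧ p.1 ≤ Xu ∧ 0 ≤ p.2 ∧
      p.2 ≤ μ * (p.1 - dl) ^ 2 ∧ p.2 ≤ μ * (p.1 - du) ^ 2})
    (hΨ : Ψ = {p : ℝ × ℝ | Xl ≤ p.1 ∧ p.1 ≤ Xu ∧ 0 ≤ p.2 ∧
      p.2 ≤ μ * (a * p.1 + b) ∧ p.2 ≤ μ * (a' * p.1 + b')}) :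
    Convex ℝ Ψ ∧ ψ ⊆ Ψ ∧ convexHull ℝ ψ ⊆ Ψ := by
  have hconv : Convex ℝ Ψ := by
    rw [hΨ]
    rintro p ⟨hp1, hp2, hp3, hp4, hp5⟩ q ⟨hq1, hq2, hq3, hq4, hq5⟩ s t hs ht hst
    simp only [Set.mem_setOf_eq, Prod.fst_add, Prod.snd_add, Prod.smul_fst, Prod.smul_snd,
      smul_eq_mul]
    refine ⟨?_, ?_, ?_, ?_, ?_⟩
    · calc Xl = s * Xl + t * Xl := by rw [← add_mul, hst, one_mul]
        _ ≤ s * p.1 + t * q.1 :=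
          add_le_add (mul_le_mul_of_nonneg_left hp1 hs) (mul_le_mul_of_nonneg_left hq1 ht)
    · calc s * p.1 + t * q.1 ≤ s * Xu + t * Xu :=
          add_le_add (mul_le_mul_of_nonneg_left hp2 hs) (mul_le_mul_of_nonneg_left hq2 ht)
        _ = Xu := by rw [← add_mul, hst, one_mul]
    · exact add_nonneg (mul_nonneg hs hp3) (mul_nonneg ht hq3)
    · calc s * p.2 + t * q.2 ≤ s * (μ * (a * p.1 + b)) + t * (μ * (a * q.1 + b)) :=
          add_le_add (mul_le_mul_of_nonneg_left hp4 hs) (mul_le_mul_of_nonneg_left hq4 ht)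
        _ = μ * (a * (s * p.1 + t * q.1) + (s + t) * b) := by ring
        _ = μ * (a * (s * p.1 + t * q.1) + b) := by rw [hst, one_mul]
    · calc s * p.2 + t * q.2 ≤ s * (μ * (a' * p.1 + b')) + t * (μ * (a' * q.1 + b')) :=
          add_le_add (mul_le_mul_of_nonneg_left hp5 hs) (mul_le_mul_of_nonneg_left hq5 ht)
        _ = μ * (a' * (s * p.1 + t * q.1) + (s + t) * b') := by ring
        _ = μ * (a' * (s * p.1 + t * q.1) + b') := by rw [hst, one_mul]
  have hsub : ψ ⊆ Ψ := by
    rw [hψ, hΨ]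
    rintro p ⟨hp1, hp2, hp3, hp4, hp5⟩
    refine ⟨hp1, hp2, hp3, ?_, ?_⟩
    · rcases le_or_gt p.1 ((dl + du) / 2) with h | h
      · have key : (p.1 - dl) ^ 2 ≤ a * p.1 + b := by
          nlinarith [mul_nonneg (by linarith : (0:ℝ) ≤ 2 * du - Xu - (dl + du) / 2)
              (by linarith : (0:ℝ) ≤ (dl + du) / 2 - p.1),
            mul_nonneg (by linarith : (0:ℝ) ≤ (dl + du) / 2 - p.1)
              (by linarith : (0:ℝ) ≤ (dl + du) / 2 + p.1 - 2 * dl)]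
        exact hp4.trans (mul_le_mul_of_nonneg_left key hμ.le)
      · have key : (p.1 - du) ^ 2 ≤ a * p.1 + b := by
          nlinarith [mul_nonneg (by linarith : (0:ℝ) ≤ p.1 - (dl + du) / 2)
              (by linarith : (0:ℝ) ≤ Xu - p.1)]
        exact hp5.trans (mul_le_mul_of_nonneg_left key hμ.le)
    · rcases le_or_gt p.1 ((dl + du) / 2) with h | h
      · have key : (p.1 - dl) ^ 2 ≤ a' * p.1 + b' := by
          nlinarith [mul_nonneg (by linarith : (0:ℝ) ≤ p.1 - Xl)
              (by linarith : (0:ℝ) ≤ (dl + du) / 2 - p.1)]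
        exact hp4.trans (mul_le_mul_of_nonneg_left key hμ.le)
      · have key : (p.1 - du) ^ 2 ≤ a' * p.1 + b' := by
          nlinarith [mul_nonneg (by linarith : (0:ℝ) ≤ Xl + (dl + du) / 2 - 2 * dl)
              (by linarith : (0:ℝ) ≤ p.1 - (dl + du) / 2),
            mul_nonneg (by linarith : (0:ℝ) ≤ p.1 - (dl + du) / 2)
              (by linarith : (0:ℝ) ≤ 2 * du - (dl + du) / 2 - p.1)]
        exact hp5.trans (mul_le_mul_of_nonneg_left key hμ.le)
  exact ⟨hconv, hsub, convexHull_min hsub hconv⟩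
end

section
/- Fix real numbers μ > 0, d̲ < d̄, and X̲, X̄ with d̲ ≤ X̲ ≤ (d̲ + d̄)/2 ≤ X̄ ≤ d̄, and define ψ = {(X, V) ∈ ℝ² : X̲ ≤ X ≤ X̄, 0 ≤ V, V ≤ μ(X − d̲)², V ≤ μ(X − d̄)²} and Ψ = {(X, V) ∈ ℝ² : X̲ ≤ X ≤ X̄, 0 ≤ V, V ≤ μ(a X + b), V ≤ μ(a′ X + b′)} with a = X̄ − (3/2)d̄ + (1/2)d̲, b = d̄² − ((d̄ + d̲)/2) X̄, a′ = X̲ − (3/2)d̲ + (1/2)d̄, b′ = d̲² − ((d̄ + d̲)/2) X̲. Then Ψ is contained in the convex hull of ψ. [Part (ii) of the proof of the paper's Theorem 3.] -/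
/-- A point on the graph of an affine function between two abscissas lies on the
segment joining the corresponding graph points. -/
lemma affine_mem_segment (c d x0 x1 x : ℝ) (h0 : x0 ≤ x) (h1 : x ≤ x1) :
    ((x, c * x + d) : ℝ × ℝ) ∈ segment ℝ (x0, c * x0 + d) (x1, c * x1 + d) := by
  have hx : x ∈ segment ℝ x0 x1 := by
    rw [segment_eq_Icc (le_trans h0 h1)]; exact ⟨h0, h1⟩
  obtain ⟨s, t, hs, ht, hst, hxv⟩ := hx
  simp only [smul_eq_mul] at hxv
  refine ⟨s, t, hs, ht, hst, ?_⟩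
  simp only [Prod.smul_mk, Prod.mk_add_mk, smul_eq_mul, Prod.mk.injEq]
  constructor
  · exact hxv
  · linear_combination c * hxv + d * hst

/-- A vertical segment membership lemma. -/
lemma vert_mem_segment (x y0 y1 v : ℝ) (h0 : y0 ≤ v) (h1 : v ≤ y1) :
    ((x, v) : ℝ × ℝ) ∈ segment ℝ (x, y0) (x, y1) := by
  have hv : v ∈ segment ℝ y0 y1 := by
    rw [segment_eq_Icc (le_trans h0 h1)]; exact ⟨h0, h1⟩
  obtain ⟨s, t, hs, ht, hst, hvv⟩ := hv
  simp only [smul_eq_mul] at hvv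
  refine ⟨s, t, hs, ht, hst, ?_⟩
  simp only [Prod.smul_mk, Prod.mk_add_mk, smul_eq_mul, Prod.mk.injEq]
  constructor
  · linear_combination x * hst
  · exact hvv

/-- Part (ii) of the proof of Theorem 3: the polyhedral set `Ψ` is contained in the
convex hull of `ψ`.
 -/
theorem stmt_5 (μ dl du Xl Xu : ℝ)
    (hμ : 0 < μ) (hd : dl < du)
    (h1 : dl ≤ Xl) (h2 : Xl ≤ (dl + du) / 2) (h3 : (dl + du) / 2 ≤ Xu) (h4 : Xu ≤ du)
    (a b a' b' : ℝ)
    (ha : a = Xu - (3 / 2) * du + (1 / 2) * dl)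
    (hb : b = du ^ 2 - ((du + dl) / 2) * Xu)
    (ha' : a' = Xl - (3 / 2) * dl + (1 / 2) * du)
    (hb' : b' = dl ^ 2 - ((du + dl) / 2) * Xl)
    (ψ Ψ : Set (ℝ × ℝ))
    (hψ : ψ = {p : ℝ × ℝ | Xl ≤ p.1 ∧ p.1 ≤ Xu ∧ 0 ≤ p.2 ∧
      p.2 ≤ μ * (p.1 - dl) ^ 2 ∧ p.2 ≤ μ * (p.1 - du) ^ 2})
    (hΨ : Ψ = {p : ℝ × ℝ | Xl ≤ p.1 ∧ p.1 ≤ Xu ∧ 0 ≤ p.2 ∧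
      p.2 ≤ μ * (a * p.1 + b) ∧ p.2 ≤ μ * (a' * p.1 + b')}) :
    Ψ ⊆ convexHull ℝ ψ := by
  have hconv : Convex ℝ (convexHull ℝ ψ) := convex_convexHull ℝ ψ
  have hsub : ψ ⊆ convexHull ℝ ψ := subset_convexHull ℝ ψ
  set m : ℝ := (dl + du) / 2 with hm
  have hXlXu : Xl ≤ Xu := le_trans h2 h3
  -- the five key points of ψ
  have hA : ((Xl, μ * (Xl - dl) ^ 2) : ℝ × ℝ) ∈ ψ := by
    rw [hψ]
    simp only [Set.mem_setOf_eq, hm]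
    refine ⟨le_refl _, hXlXu, by positivity, le_refl _, ?_⟩
    nlinarith [mul_nonneg (sub_nonneg.2 hd.le) (by linarith : (0:ℝ) ≤ dl + du - 2 * Xl)]
  have hB : ((m, μ * ((du - dl) / 2) ^ 2) : ℝ × ℝ) ∈ ψ := by
    rw [hψ]
    simp only [Set.mem_setOf_eq, hm]
    refine ⟨h2, h3, by positivity, ?_, ?_⟩ <;> nlinarith []
  have hC : ((Xu, μ * (Xu - du) ^ 2) : ℝ × ℝ) ∈ ψ := by
    rw [hψ]
    simp only [Set.mem_setOf_eq, hm]
    refine ⟨hXlXu, le_refl _, by positivity, ?_, le_refl _⟩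
    nlinarith [mul_nonneg (sub_nonneg.2 hd.le) (by linarith : (0:ℝ) ≤ 2 * Xu - dl - du)]
  intro p hp
  rw [hΨ] at hp
  obtain ⟨hX1, hX2, hV0, hVa, hVa'⟩ := hp
  have hbase : ((p.1, 0) : ℝ × ℝ) ∈ ψ := by
    rw [hψ]
    simp only [Set.mem_setOf_eq]
    exact ⟨hX1, hX2, le_refl _, by positivity, by positivity⟩
  have hpeta : p = (p.1, p.2) := rfl
  by_cases hX : p.1 ≤ m
  · -- use the secant of the left parabola
    have hT : ((p.1, μ * a' * p.1 + μ * b') : ℝ × ℝ) ∈ convexHull ℝ ψ := by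
      have hseg := affine_mem_segment (μ * a') (μ * b') Xl m p.1 hX1 hX
      have e1 : μ * a' * Xl + μ * b' = μ * (Xl - dl) ^ 2 := by rw [ha', hb']; ring
      have e2 : μ * a' * m + μ * b' = μ * ((du - dl) / 2) ^ 2 := by
        rw [ha', hb', hm]; ring
      rw [e1, e2] at hseg
      exact hconv.segment_subset (hsub hA) (hsub hB) hseg
    have hle : p.2 ≤ μ * a' * p.1 + μ * b' := by nlinarith [hVa']
    have := vert_mem_segment p.1 0 (μ * a' * p.1 + μ * b') p.2 hV0 hle
    rw [hpeta]
    exact hconv.segment_subset (hsub hbase) hT this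
  · -- use the secant of the right parabola
    push_neg at hX
    have hT : ((p.1, μ * a * p.1 + μ * b) : ℝ × ℝ) ∈ convexHull ℝ ψ := by
      have hseg := affine_mem_segment (μ * a) (μ * b) m Xu p.1 hX.le hX2
      have e1 : μ * a * m + μ * b = μ * ((du - dl) / 2) ^ 2 := by
        rw [ha, hb, hm]; ring
      have e2 : μ * a * Xu + μ * b = μ * (Xu - du) ^ 2 := by rw [ha, hb]; ring
      rw [e1, e2] at hseg
      exact hconv.segment_subset (hsub hB) (hsub hC) hseg
    have hle : p.2 ≤ μ * a * p.1 + μ * b := by nlinarith [hVa]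
    have := vert_mem_segment p.1 0 (μ * a * p.1 + μ * b) p.2 hV0 hle
    rw [hpeta]
    exact hconv.segment_subset (hsub hbase) hT this
end

section
/- Let A be an n×n real matrix, P an n×n symmetric positive definite matrix such that Q := −(P A + Aᵀ P) is (symmetric) positive definite, and let γ ≥ 0 satisfy 2 γ ‖P‖ ≤ λmin(Q), where λmin(Q) is the smallest eigenvalue of Q and ‖P‖ is the operator norm induced by the Euclidean norm. Then for every n×n real matrix G with operator norm ‖G‖ ≤ γ and every y ∈ ℝⁿ, the derivative of the quadratic Lyapunov function V(y) = yᵀ P y along the polynomial vector field ẏ = (A + G) y is nonpositive: yᵀ(P A + Aᵀ P) y + 2 yᵀ P G y ≤ 0. [The conclusion of the paper's Proposition 4: V(x) = (x − x°)ᵀP(x − x°) is a valid local Lyapunov function for the polynomial system ẋ = [A + G(x − x°)](x − x°) whenever ‖G(x − x°)‖ ≤ γ on the region of interest.] -/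
/-!
Write `c = λmin(Q)`. Since `Q - c • 1` is positive semidefinite, `yᵀ(PA + AᵀP)y = -yᵀQy ≤ -c‖y‖²`,
while `2 yᵀPGy ≤ 2‖PG‖‖y‖² ≤ 2‖P‖γ‖y‖² ≤ c‖y‖²` by submultiplicativity of the operator norm.
-/

open Matrix

theorem Matrix.IsHermitian.iInf_eigenvalues_mul_dotProduct_self_le {n : Type*} [Fintype n]
    [DecidableEq n] {Q : Matrix n n ℝ} (hQ : Q.IsHermitian) (y : n → ℝ) :
    (⨅ i, hQ.eigenvalues i) * (y ⬝ᵥ y) ≤ y ⬝ᵥ Q *ᵥ y := by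
  open scoped MatrixOrder Matrix.Norms.L2Operator in
  have hle : algebraMap ℝ (Matrix n n ℝ) (⨅ i, hQ.eigenvalues i) ≤ Q := by
    rw [algebraMap_le_iff_le_spectrum hQ.isSelfAdjoint, hQ.spectrum_real_eq_range_eigenvalues]
    rintro _ ⟨i, rfl⟩
    exact ciInf_le (Finite.bddBelow_range _) i
  have hpsd := (Matrix.le_iff.mp hle).dotProduct_mulVec_nonneg y
  rw [sub_mulVec, dotProduct_sub, Algebra.algebraMap_eq_smul_one, smul_mulVec, one_mulVec,
    dotProduct_smul, star_trivial, smul_eq_mul] at hpsd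
  linarith

theorem Matrix.dotProduct_mulVec_le_norm_toEuclideanCLM_mul_sq {n : Type*} [Fintype n]
    [DecidableEq n] (M : Matrix n n ℝ) (y : EuclideanSpace ℝ n) :
    y ⬝ᵥ M *ᵥ y ≤ ‖toEuclideanCLM (𝕜 := ℝ) M‖ * ‖y‖ ^ 2 :=
  calc y ⬝ᵥ M *ᵥ y = inner ℝ y (toEuclideanCLM (𝕜 := ℝ) M y) := by
        rw [EuclideanSpace.inner_eq_star_dotProduct, ofLp_toEuclideanCLM, star_trivial,
          dotProduct_comm]
    _ ≤ ‖y‖ * ‖toEuclideanCLM (𝕜 := ℝ) M y‖ := real_inner_le_norm _ _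
    _ ≤ ‖y‖ * (‖toEuclideanCLM (𝕜 := ℝ) M‖ * ‖y‖) := by
          gcongr; exact (toEuclideanCLM (𝕜 := ℝ) M).le_opNorm y
    _ = ‖toEuclideanCLM (𝕜 := ℝ) M‖ * ‖y‖ ^ 2 := by ring

theorem EuclideanSpace.dotProduct_self_eq_norm_sq {n : Type*} [Fintype n] (y : EuclideanSpace ℝ n) :
    y ⬝ᵥ y = ‖y‖ ^ 2 := by
  rw [← real_inner_self_eq_norm_sq, EuclideanSpace.inner_eq_star_dotProduct, star_trivial]

theorem stmt_8_general {n : ℕ} (A P Q : Matrix (Fin n) (Fin n) ℝ)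
    (hQdef : Q = -(P * A + Aᵀ * P)) (hQ : Q.PosDef)
    (γ : ℝ)
    (hgap : 2 * γ * ‖Matrix.toEuclideanCLM (𝕜 := ℝ) P‖ ≤ ⨅ i, hQ.isHermitian.eigenvalues i) :
    ∀ G : Matrix (Fin n) (Fin n) ℝ, ‖Matrix.toEuclideanCLM (𝕜 := ℝ) G‖ ≤ γ →
      ∀ y : EuclideanSpace ℝ (Fin n),
        y ⬝ᵥ (P * A + Aᵀ * P).mulVec y + 2 * (y ⬝ᵥ P.mulVec (G.mulVec y)) ≤ 0 := by
  intro G hG y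
  have hsym : P * A + Aᵀ * P = -Q := by rw [hQdef, neg_neg]
  have hQy := hQ.isHermitian.iInf_eigenvalues_mul_dotProduct_self_le y
  rw [EuclideanSpace.dotProduct_self_eq_norm_sq] at hQy
  have hPGy := dotProduct_mulVec_le_norm_toEuclideanCLM_mul_sq (P * G) y
  have hPG : ‖toEuclideanCLM (𝕜 := ℝ) (P * G)‖ ≤ ‖toEuclideanCLM (𝕜 := ℝ) P‖ * γ := by
    rw [map_mul]
    exact (norm_mul_le _ _).trans (by gcongr)
  rw [hsym, neg_mulVec, dotProduct_neg, mulVec_mulVec]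
  nlinarith [sq_nonneg ‖y‖]

/-- Proposition 4 (conclusion): if `P` is symmetric positive definite,
`Q = −(PA + AᵀP)` is positive definite, and `2γ‖P‖ ≤ λmin(Q)` with `γ ≥ 0`, then for every
matrix `G` with operator norm `‖G‖ ≤ γ` and every `y`, the Lyapunov derivative of
`V(y) = yᵀPy` along `ẏ = (A + G)y` is nonpositive. -/
theorem stmt_8 {n : ℕ} (A P Q : Matrix (Fin n) (Fin n) ℝ)
    (hP : P.PosDef) (hQdef : Q = -(P * A + Aᵀ * P)) (hQ : Q.PosDef)
    (γ : ℝ) (hγ : 0 ≤ γ)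
    (hgap : 2 * γ * ‖Matrix.toEuclideanCLM (𝕜 := ℝ) P‖ ≤ ⨅ i, hQ.isHermitian.eigenvalues i) :
    ∀ G : Matrix (Fin n) (Fin n) ℝ, ‖Matrix.toEuclideanCLM (𝕜 := ℝ) G‖ ≤ γ →
      ∀ y : EuclideanSpace ℝ (Fin n),
        y ⬝ᵥ (P * A + Aᵀ * P).mulVec y + 2 * (y ⬝ᵥ P.mulVec (G.mulVec y)) ≤ 0 :=
  stmt_8_general A P Q hQdef hQ γ hgap
end
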